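/- arXiv:1912.12525 — 5 statements merged into one kernel-verified Lean document; each statement's English description precedes it below -/
import Mathlib

section
/- If a linear program min{c^T x : A x ≥ b} has a nonempty feasible region and its objective function is bounded below over that region, then the linear program attains its optimal value at some feasible point. -/
/-!
The attained objective values form the slice `{v | (b, v) ∈ K}` of
`K = {(A x - s, cᵀx) | s ≥ 0}`, the image of a nonnegative orthant under a linear map, i.e. a
finitely generated convex cone. Such a cone is closed: by conical Carathéodory every point of it
is a nonnegative combination of linearly independent generators, and the cone spanned by linearly
independent vectors is the image of a closed orthant under a closed embedding. So the set of
values is closed, nonempty and bounded below, hence contains its infimum.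
-/

open Matrix

section Supported

variable {R ι : Type*} [Semiring R]

variable (R) in
def Pi.supported (s : Set ι) : Submodule R (ι → R) :=
  Submodule.pi sᶜ fun _ => ⊥

theorem Pi.mem_supported {s : Set ι} {u : ι → R} :
    u ∈ Pi.supported R s ↔ Function.support u ⊆ s := by
  simp only [Pi.supported, Submodule.mem_pi, Submodule.mem_bot, Set.mem_compl_iff]
  exact ⟨fun h i hi => not_imp_comm.mp (h i) hi, fun h i hi => not_imp_comm.mp (@h i) hi⟩

end Supported

section ConicalCaratheodory

variable {𝕜 ι M : Type*} [Field 𝕜] [LinearOrder 𝕜] [IsStrictOrderedRing 𝕜] [Fintype ι]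
  [AddCommGroup M] [Module 𝕜 M]

/-- The ratio test of the simplex method: move from `l` along `-μ` until a coordinate hits zero. -/
theorem exists_sub_smul_nonneg_and_eq_mul {l μ : ι → 𝕜} (hl : 0 ≤ l)
    (hμ : ∃ i, 0 < μ i) : ∃ t : 𝕜, 0 ≤ l - t • μ ∧ ∃ i, 0 < μ i ∧ l i = t * μ i := by
  classical
  obtain ⟨i, hi, hmin⟩ := Finset.exists_min_image {i | 0 < μ i} (fun i => l i / μ i)
    (by simpa [Finset.Nonempty] using hμ)
  replace hi : 0 < μ i := by simpa using hi
  refine ⟨l i / μ i, fun j => ?_, i, hi, (div_mul_cancel₀ _ hi.ne').symm⟩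
  have ht : 0 ≤ l i / μ i := div_nonneg (hl i) hi.le
  rcases le_or_gt (μ j) 0 with hj | hj
  · simpa using (hl j).trans (le_sub_self_iff _ |>.mpr (mul_nonpos_of_nonneg_of_nonpos ht hj))
  · simpa [le_div_iff₀ hj] using hmin j (by simpa using hj)

theorem exists_nonneg_support_ssubset_of_not_disjoint_ker (f : (ι → 𝕜) →ₗ[𝕜] M)
    {l : ι → 𝕜} (hl : 0 ≤ l)
    (h : ¬ Disjoint (LinearMap.ker f) (Pi.supported 𝕜 (Function.support l))) :
    ∃ l' : ι → 𝕜, 0 ≤ l' ∧ f l' = f l ∧ Function.support l' ⊂ Function.support l := by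
  obtain ⟨μ, hμker, hμsupp, hμpos⟩ : ∃ μ ∈ LinearMap.ker f,
      μ ∈ Pi.supported 𝕜 (Function.support l) ∧ ∃ i, 0 < μ i := by
    obtain ⟨ν, hνker, hνsupp, hν⟩ := by simpa [Submodule.disjoint_def] using h
    obtain ⟨i, hi⟩ := Function.ne_iff.mp hν
    rcases hi.lt_or_gt with hi | hi
    · exact ⟨-ν, neg_mem hνker, neg_mem hνsupp, i, by simpa using hi⟩
    · exact ⟨ν, hνker, hνsupp, i, hi⟩
  rw [Pi.mem_supported] at hμsupp
  obtain ⟨t, hnonneg, i, hi, hli⟩ := exists_sub_smul_nonneg_and_eq_mul hl hμpos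
  refine ⟨l - t • μ, hnonneg, by simp [LinearMap.mem_ker.mp hμker], ?_⟩
  have hsubset : Function.support (l - t • μ) ⊆ Function.support l :=
    (Function.support_sub _ _).trans
      (Set.union_subset subset_rfl ((Function.support_const_smul_subset t μ).trans hμsupp))
  exact (Set.ssubset_iff_of_subset hsubset).mpr ⟨i, hμsupp hi.ne', by simp [hli]⟩

/-- **Conical Carathéodory**: a nonnegative solution of `f l = v` can be chosen so that `f` is
injective on the vectors supported where it is. -/
theorem exists_nonneg_disjoint_ker_supported (f : (ι → 𝕜) →ₗ[𝕜] M) {l : ι → 𝕜} (hl : 0 ≤ l) :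
    ∃ l' : ι → 𝕜, 0 ≤ l' ∧ f l' = f l ∧
      Disjoint (LinearMap.ker f) (Pi.supported 𝕜 (Function.support l')) := by
  induction hk : (Function.support l).ncard using Nat.strong_induction_on generalizing l with
  | _ k ih =>
    by_cases hdisj : Disjoint (LinearMap.ker f) (Pi.supported 𝕜 (Function.support l))
    · exact ⟨l, hl, rfl, hdisj⟩
    obtain ⟨l₂, hl₂, hfl₂, hlt⟩ := exists_nonneg_support_ssubset_of_not_disjoint_ker f hl hdisj
    obtain ⟨l', hl', hfl', hdisj'⟩ := ih _ (hk ▸ Set.ncard_lt_ncard hlt) hl₂ rfl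
    exact ⟨l', hl', hfl'.trans hfl₂, hdisj'⟩

end ConicalCaratheodory

section Closedness

variable {E : Type*} [NormedAddCommGroup E] [NormedSpace ℝ E]

theorem LinearMap.isClosed_image_of_disjoint_ker {F : Type*} [NormedAddCommGroup F]
    [NormedSpace ℝ F] [FiniteDimensional ℝ F] (f : F →ₗ[ℝ] E) {W : Submodule ℝ F}
    (hW : Disjoint (LinearMap.ker f) W) {S : Set F} (hS : IsClosed S) (hSW : S ⊆ W) :
    IsClosed (f '' S) := by
  have hinj : LinearMap.ker (f.domRestrict W) = ⊥ := by
    rw [LinearMap.ker_domRestrict, ← Submodule.disjoint_iff_comap_eq_bot, disjoint_comm]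
    exact hW
  have himage : f '' S = f.domRestrict W '' (Subtype.val ⁻¹' S) := by
    rw [LinearMap.coe_domRestrict, Set.domRestrict_eq, Set.image_comp]
    congr 1
    ext x
    simpa using fun hx => hSW hx
  rw [himage]
  exact (LinearMap.isClosedEmbedding_of_injective hinj).isClosedMap _
    (hS.preimage continuous_subtype_val)

variable {ι κ : Type*} [Fintype ι] [Fintype κ]

theorem LinearMap.isClosed_image_nonneg (f : (ι → ℝ) →ₗ[ℝ] E) :
    IsClosed (f '' Set.Ici 0) := by
  have hunion : f '' Set.Ici 0 = ⋃ s ∈ {s : Set ι | Disjoint (LinearMap.ker f) (Pi.supported ℝ s)},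
      f '' (Set.Ici 0 ∩ Pi.supported ℝ s) := by
    refine subset_antisymm ?_ (Set.iUnion₂_subset fun s _ => Set.image_mono Set.inter_subset_left)
    rintro _ ⟨l, hl, rfl⟩
    obtain ⟨l', hl', hfl', hdisj⟩ := exists_nonneg_disjoint_ker_supported f hl
    exact Set.mem_biUnion hdisj ⟨l', ⟨hl', Pi.mem_supported.mpr subset_rfl⟩, hfl'⟩
  rw [hunion]
  refine (Set.toFinite _).isClosed_biUnion fun s hs => ?_
  exact f.isClosed_image_of_disjoint_ker hs
    (isClosed_Ici.inter (Submodule.closed_of_finiteDimensional _)) Set.inter_subset_right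

theorem LinearMap.isClosed_image_snd_nonneg (f : (κ → ℝ) × (ι → ℝ) →ₗ[ℝ] E) :
    IsClosed (f '' {p | 0 ≤ p.2}) := by
  let split : (κ ⊕ κ ⊕ ι → ℝ) →ₗ[ℝ] (κ → ℝ) × (ι → ℝ) :=
    (LinearMap.funLeft ℝ ℝ Sum.inl - LinearMap.funLeft ℝ ℝ (Sum.inr ∘ Sum.inl)).prod
      (LinearMap.funLeft ℝ ℝ (Sum.inr ∘ Sum.inr))
  have hsplit : split '' Set.Ici 0 = {p | 0 ≤ p.2} := by
    refine subset_antisymm ?_ fun p hp => ?_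
    · rintro _ ⟨l, hl, rfl⟩ i
      exact hl _
    · refine ⟨Sum.elim p.1⁺ (Sum.elim p.1⁻ p.2), fun i => ?_, ?_⟩
      · rcases i with j | j | i
        exacts [posPart_nonneg (p.1 j), negPart_nonneg (p.1 j), hp i]
      · ext : 1
        · exact posPart_sub_negPart p.1
        · rfl
  rw [← hsplit, ← Set.image_comp]
  exact (f ∘ₗ split).isClosed_image_nonneg

end Closedness

section LinearProgram

variable {ι κ : Type*} [Fintype ι]

def Matrix.constraintObjectiveMap (A : Matrix κ ι ℝ) (c : ι → ℝ) :
    (ι → ℝ) × (κ → ℝ) →ₗ[ℝ] (κ → ℝ) × ℝ :=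
  (A.mulVecLin ∘ₗ LinearMap.fst ℝ _ _ - LinearMap.snd ℝ _ _).prod
    (dotProductBilin ℝ ℝ c ∘ₗ LinearMap.fst ℝ _ _)

theorem Matrix.mk_mem_image_constraintObjectiveMap_iff (A : Matrix κ ι ℝ) (b : κ → ℝ)
    (c : ι → ℝ) (v : ℝ) :
    (b, v) ∈ A.constraintObjectiveMap c '' {p | 0 ≤ p.2} ↔ ∃ x, b ≤ A *ᵥ x ∧ c ⬝ᵥ x = v := by
  constructor
  · rintro ⟨⟨x, s⟩, hs, h⟩
    simp only [constraintObjectiveMap, LinearMap.prod_apply, LinearMap.coe_comp, LinearMap.coe_fst,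
      Function.prod_apply, LinearMap.sub_apply, Function.comp_apply, mulVecBilin_apply,
      LinearMap.snd_apply, dotProductBilin_apply_apply, Prod.mk.injEq] at h
    exact ⟨x, h.1 ▸ sub_le_self _ hs, h.2⟩
  · rintro ⟨x, hx, rfl⟩
    exact ⟨(x, A *ᵥ x - b), sub_nonneg.mpr hx, by simp [constraintObjectiveMap]⟩

end LinearProgram

/-- If a linear program `min {cᵀx : Ax ≥ b}` has a nonempty feasible region and its
objective is bounded below over that region, then it attains its optimum at a feasible point. -/
theorem lp_attains_optimum (m n : ℕ) (A : Matrix (Fin m) (Fin n) ℝ)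
    (b : Fin m → ℝ) (c : Fin n → ℝ)
    (hne : ∃ x : Fin n → ℝ, ∀ i, b i ≤ A.mulVec x i)
    (hbdd : BddBelow {v : ℝ | ∃ x : Fin n → ℝ, (∀ i, b i ≤ A.mulVec x i) ∧ v = c ⬝ᵥ x}) :
    ∃ x : Fin n → ℝ, (∀ i, b i ≤ A.mulVec x i) ∧
      ∀ y : Fin n → ℝ, (∀ i, b i ≤ A.mulVec y i) → c ⬝ᵥ x ≤ c ⬝ᵥ y := by
  set values := {v : ℝ | ∃ x : Fin n → ℝ, (∀ i, b i ≤ A.mulVec x i) ∧ v = c ⬝ᵥ x}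
  have hvalues : values = (b, ·) ⁻¹' (A.constraintObjectiveMap c '' {p | 0 ≤ p.2}) := by
    ext v
    simp only [Set.mem_preimage, mk_mem_image_constraintObjectiveMap_iff, eq_comm]
    rfl
  have hclosed : IsClosed values :=
    hvalues ▸ (LinearMap.isClosed_image_snd_nonneg _).preimage (Continuous.prodMk_right b)
  obtain ⟨x, hx, hxmin⟩ := hclosed.csInf_mem (hne.elim fun x hx => ⟨_, x, hx, rfl⟩) hbdd
  exact ⟨x, hx, fun y hy => hxmin ▸ csInf_le hbdd ⟨y, hy, rfl⟩⟩
end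

section
/- In a finite-horizon Markov decision process with bounded rewards, for any penalty function of the form π_i(a, ω) = V_{i+1}(f(x_i,a), ξ_{i+1}(ω)) - E[V_{i+1}(f(x_i,a), ξ_{i+1}) | ξ_i(ω)] built from any integrable functions V_{i+1}, the expectation of the pathwise (hindsight-optimal) penalized value is an upper bound on the optimal policy value. -/
/-!
Fix a nonanticipative policy. Its state and action at stage `i` are functions of the noise
history up to `i`, so summing the penalty over each class of equal histories gives zero:
the policy's expected total penalty vanishes. Hence the policy's expected reward equals its
expected penalized reward, which pathwise is at most the hindsight optimum over all action
sequences. That set of pathwise values is finite, since a value only depends on the first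
`I` actions.
-/

open Finset Classical

noncomputable section
open scoped Classical

/-- State trajectory induced by a deterministic transition function, an initial state,
and a sequence of actions. -/
def traj {S A : Type} (f : S → A → S) (x0 : S) (σ : ℕ → A) : ℕ → S
  | 0 => x0
  | n + 1 => f (traj f x0 σ n) (σ n)

theorem traj_congr {S A : Type} (f : S → A → S) (x0 : S) {σ σ' : ℕ → A} {i : ℕ}
    (h : ∀ j < i, σ j = σ' j) : traj f x0 σ i = traj f x0 σ' i := by
  induction i with
  | zero => rfl
  | succ n ih =>
    rw [traj, traj, ih fun j hj => h j (hj.trans n.lt_succ_self), h n n.lt_succ_self]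

theorem Set.finite_range_of_factorsThrough {α β γ : Type*} [Finite β] {F : α → γ} {φ : α → β}
    (hF : F.FactorsThrough φ) : (Set.range F).Finite := by
  refine (Set.finite_range fun b : Set.range φ => F b.2.choose).subset ?_
  rintro _ ⟨a, rfl⟩
  let b : Set.range φ := ⟨φ a, a, rfl⟩
  exact ⟨b, hF b.2.choose_spec⟩

theorem bddAbove_sum_traj {S A : Type} [Finite A] (f : S → A → S) (x0 : S)
    (g : ℕ → S → A → ℝ) (I : ℕ) :
    BddAbove {v : ℝ | ∃ σ : ℕ → A, v = ∑ i ∈ range I, g i (traj f x0 σ i) (σ i)} := by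
  have hfin := Set.finite_range_of_factorsThrough
    (F := fun σ : ℕ → A => ∑ i ∈ range I, g i (traj f x0 σ i) (σ i))
    (φ := fun σ (j : Fin I) => σ j) fun σ σ' hσ => by
      refine sum_congr rfl fun i hi => ?_
      have hagree : ∀ j < i + 1, σ j = σ' j := fun j hj =>
        congrFun hσ ⟨j, lt_of_lt_of_le hj (mem_range.mp hi)⟩
      rw [traj_congr f x0 fun j hj => hagree j (hj.trans i.lt_succ_self),
        hagree i i.lt_succ_self]
  refine hfin.bddAbove.mono ?_
  rintro v ⟨σ, rfl⟩
  exact ⟨σ, rfl⟩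

theorem sum_mul_eq_zero_of_sum_class_eq_zero {Ω β : Type*} [Fintype Ω] {r : Ω → Ω → Prop}
    (hr : Equivalence r) (P : Ω → ℝ) (h : β → Ω → ℝ) {c : Ω → β}
    (hc : ∀ ω ω', r ω ω' → c ω = c ω')
    (hclass : ∀ b ω, ∑ ω' ∈ univ.filter (fun ω' => r ω' ω), P ω' * h b ω' = 0) :
    ∑ ω, P ω * h (c ω) ω = 0 := by
  let κ : Ω → Quotient ⟨r, hr⟩ := Quotient.mk _
  have hfiber : ∀ ω, 0 = ∑ ω' ∈ univ with κ ω' = κ ω, P ω' * h (c ω') ω' := fun ω => by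
    rw [← hclass (c ω) ω]
    refine (sum_congr ?_ fun ω' hω' => ?_).symm
    · ext ω'
      simp only [mem_filter, mem_univ, true_and, κ, Quotient.eq]
    · rw [hc ω' ω (mem_filter.mp hω').2]
  rw [← sum_image' (f := fun _ => (0 : ℝ)) _ fun ω _ => hfiber ω, sum_const_zero]

theorem sum_mul_pen_eq_zero_of_nonanticipative {Ω Z S A : Type} [Fintype Ω] (P : Ω → ℝ)
    (ξ : ℕ → Ω → Z) (f : S → A → S) (x0 : S) (pen : S → A → Ω → ℝ) (i : ℕ)
    (hmart : ∀ (x : S) (a : A) (ω : Ω),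
      ∑ ω' ∈ univ.filter (fun ω' => ∀ j ≤ i, ξ j ω' = ξ j ω), P ω' * pen x a ω' = 0)
    {π : ℕ → Ω → A}
    (hπ : ∀ (k : ℕ) (ω ω' : Ω), (∀ j ≤ k, ξ j ω = ξ j ω') → π k ω = π k ω') :
    ∑ ω, P ω * pen (traj f x0 (fun n => π n ω) i) (π i ω) ω = 0 := by
  have hr : Equivalence fun ω ω' : Ω => ∀ j ≤ i, ξ j ω = ξ j ω' :=
    ⟨fun _ _ _ => rfl, fun h j hj => (h j hj).symm, fun h h' j hj => (h j hj).trans (h' j hj)⟩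
  refine sum_mul_eq_zero_of_sum_class_eq_zero hr P (fun xa : S × A => pen xa.1 xa.2)
    (c := fun ω => (traj f x0 (fun n => π n ω) i, π i ω)) (fun ω ω' hω => ?_)
    fun xa ω => by convert hmart xa.1 xa.2 ω
  have hpast : ∀ k ≤ i, π k ω = π k ω' := fun k hk =>
    hπ k ω ω' fun j hj => hω j (hj.trans hk)
  rw [traj_congr f x0 fun j hj => hpast j hj.le, hpast i le_rfl]

theorem sum_mul_sum_mul_sub {Ω ι : Type*} [Fintype Ω] (P : Ω → ℝ) (s : Finset ι)
    (c : ι → ℝ) (x y : ι → Ω → ℝ) :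
    ∑ ω, P ω * ∑ i ∈ s, c i * (x i ω - y i ω)
      = ∑ ω, P ω * ∑ i ∈ s, c i * x i ω - ∑ i ∈ s, c i * ∑ ω, P ω * y i ω := by
  simp only [mul_sub, sum_sub_distrib, mul_sum]
  congr 1
  rw [sum_comm]
  simp only [mul_left_comm]

theorem information_relaxation_weak_duality_general
    (Ω : Type) [Fintype Ω] (P : Ω → ℝ) (hP0 : ∀ ω, 0 ≤ P ω)
    (Z : Type) (ξ : ℕ → Ω → Z)
    (S A : Type) [Fintype A] [Nonempty A] (f : S → A → S) (x0 : S)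
    (r : ℕ → S → A → Z → ℝ) (δ : ℝ) (I : ℕ)
    (pen : ℕ → S → A → Ω → ℝ)
    (hmart : ∀ (i : ℕ) (x : S) (a : A) (ω : Ω),
      ∑ ω' ∈ Finset.univ.filter (fun ω' => ∀ j ≤ i, ξ j ω' = ξ j ω), P ω' * pen i x a ω' = 0) :
    (⨆ π : {π : ℕ → Ω → A //
        ∀ (i : ℕ) (ω ω' : Ω), (∀ j ≤ i, ξ j ω = ξ j ω') → π i ω = π i ω'},
      ∑ ω, P ω * ∑ i ∈ Finset.range I,
        δ ^ i * r i (traj f x0 (fun n => π.1 n ω) i) (π.1 i ω) (ξ i ω)) ≤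
    ∑ ω, P ω * sSup {v : ℝ | ∃ σ : ℕ → A,
      v = ∑ i ∈ Finset.range I,
        δ ^ i * (r i (traj f x0 σ i) (σ i) (ξ i ω) - δ * pen i (traj f x0 σ i) (σ i) ω)} := by
  have : Nonempty {π : ℕ → Ω → A //
      ∀ (i : ℕ) (ω ω' : Ω), (∀ j ≤ i, ξ j ω = ξ j ω') → π i ω = π i ω'} :=
    ⟨⟨fun _ _ => Classical.arbitrary A, fun _ _ _ _ => rfl⟩⟩
  refine ciSup_le ?_
  rintro ⟨π, hπ⟩
  have hpen : ∀ i, ∑ ω, P ω * pen i (traj f x0 (fun n => π n ω) i) (π i ω) ω = 0 :=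
    fun i => sum_mul_pen_eq_zero_of_nonanticipative P ξ f x0 (pen i) i (hmart i) hπ
  calc ∑ ω, P ω * ∑ i ∈ range I, δ ^ i * r i (traj f x0 (fun n => π n ω) i) (π i ω) (ξ i ω)
      = ∑ ω, P ω * ∑ i ∈ range I, δ ^ i * (r i (traj f x0 (fun n => π n ω) i) (π i ω) (ξ i ω)
          - δ * pen i (traj f x0 (fun n => π n ω) i) (π i ω) ω) := by
        rw [sum_mul_sum_mul_sub]
        simp only [mul_left_comm (P _) δ, ← mul_sum, hpen, mul_zero, sum_const_zero, sub_zero]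
    _ ≤ _ := sum_le_sum fun ω _ => mul_le_mul_of_nonneg_left
        (le_csSup (bddAbove_sum_traj f x0
          (fun i x a => δ ^ i * (r i x a (ξ i ω) - δ * pen i x a ω)) I)
          ⟨fun n => π n ω, rfl⟩) (hP0 ω)

/-- Information relaxation weak duality for a finite-horizon MDP with bounded rewards:
for any martingale-difference penalty (zero conditional expectation given the noise history,
for every fixed state and action), the expectation of the pathwise hindsight-optimal
penalized value is an upper bound on the optimal (nonanticipative) policy value `V_0`. -/
theorem information_relaxation_weak_duality
    (Ω : Type) [Fintype Ω] (P : Ω → ℝ) (hP0 : ∀ ω, 0 ≤ P ω) (hP1 : ∑ ω, P ω = 1)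
    (Z : Type) (ξ : ℕ → Ω → Z)
    (S A : Type) [Fintype A] [Nonempty A] (f : S → A → S) (x0 : S)
    (r : ℕ → S → A → Z → ℝ) (δ : ℝ) (hδ0 : 0 < δ) (hδ1 : δ ≤ 1) (I : ℕ) (hI : 0 < I)
    (pen : ℕ → S → A → Ω → ℝ)
    (hmart : ∀ (i : ℕ) (x : S) (a : A) (ω : Ω),
      ∑ ω' ∈ Finset.univ.filter (fun ω' => ∀ j ≤ i, ξ j ω' = ξ j ω), P ω' * pen i x a ω' = 0) :
    (⨆ π : {π : ℕ → Ω → A //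
        ∀ (i : ℕ) (ω ω' : Ω), (∀ j ≤ i, ξ j ω = ξ j ω') → π i ω = π i ω'},
      ∑ ω, P ω * ∑ i ∈ Finset.range I,
        δ ^ i * r i (traj f x0 (fun n => π.1 n ω) i) (π.1 i ω) (ξ i ω)) ≤
    ∑ ω, P ω * sSup {v : ℝ | ∃ σ : ℕ → A,
      v = ∑ i ∈ Finset.range I,
        δ ^ i * (r i (traj f x0 σ i) (σ i) (ξ i ω) - δ * pen i (traj f x0 σ i) (σ i) ω)} :=
  information_relaxation_weak_duality_general Ω P hP0 Z ξ S A f x0 r δ I pen hmart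
end
end

section
/- If the penalty in the information relaxation dual is constructed from the true value function of the MDP, then for every sample path the penalized hindsight optimization equals the optimal value V_0; i.e., the dual with ideal penalties attains the optimal policy value almost surely with zero variance. -/
noncomputable section
open Finset
open scoped Classical

/-- Exact dynamic-programming value function, indexed by the number `k` of stages to go
(so that `dpval … k` is the value function at stage `I - k`), for a finite-horizon MDP with
exogenous Markov noise governed by the transition kernel `p`. -/
def dpval {S A Z : Type} [Fintype A] [Nonempty A] [Fintype Z]
    (f : S → A → S) (r : ℕ → S → A → Z → ℝ) (p : Z → Z → ℝ) (δ : ℝ) (I : ℕ) :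
    ℕ → S → Z → ℝ
  | 0 => fun _ _ => 0
  | k + 1 => fun x z => Finset.univ.sup' Finset.univ_nonempty fun a : A =>
      r (I - (k + 1)) x a z + δ * ∑ z' : Z, p z z' * dpval f r p δ I k (f x a) z'

/-! The ideal penalty turns each stage reward into the Bellman slack `Q_i(x_i, a_i) - V_i(x_i)`
plus the telescoping difference `δ^i V_i(x_i) - δ^(i+1) V_(i+1)(x_(i+1))`, evaluated pathwise.
Summing, every action sequence earns `V_0(x_0)` plus a sum of nonpositive slacks, and the
sequence that follows the greedy policy along the realised noise has all slacks zero. -/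

theorem Finset.sum_range_discounted_penalty_telescope (δ : ℝ) (I : ℕ) (r e V : ℕ → ℝ) :
    ∑ i ∈ range I, δ ^ i * (r i - δ * (V (i + 1) - e i)) =
      ∑ i ∈ range I, δ ^ i * (r i + δ * e i - V i) + (V 0 - δ ^ I * V I) := by
  have h := sum_range_sub' (fun i => δ ^ i * V i) I
  rw [pow_zero, one_mul] at h
  rw [← h, ← sum_add_distrib]
  refine sum_congr rfl fun i _ => ?_
  ring

theorem exists_eq_feedback_traj {S A : Type} (f : S → A → S) (x0 : S) (μ : ℕ → S → A) :
    ∃ σ : ℕ → A, ∀ n, σ n = μ n (traj f x0 σ n) := by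
  let xs : ℕ → S := fun n => Nat.rec x0 (fun k x => f x (μ k x)) n
  refine ⟨fun n => μ n (xs n), fun n => congrArg (μ n) ?_⟩
  have hxs : ∀ n, traj f x0 (fun n => μ n (xs n)) n = xs n := by
    intro n
    induction n with
    | zero => rfl
    | succ n ih => simp only [traj, ih]; rfl
  exact (hxs n).symm

section IdealPenalty

variable {S A Z : Type} [Fintype A] [Nonempty A] [Fintype Z]
  (f : S → A → S) (r : ℕ → S → A → Z → ℝ) (p : Z → Z → ℝ) (δ : ℝ) (I : ℕ)

def qval (i : ℕ) (x : S) (a : A) (z : Z) : ℝ :=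
  r i x a z + δ * ∑ z' : Z, p z z' * dpval f r p δ I (I - (i + 1)) (f x a) z'

theorem dpval_sub_eq_sup'_qval {i : ℕ} (hi : i < I) (x : S) (z : Z) :
    dpval f r p δ I (I - i) x z = univ.sup' univ_nonempty fun a => qval f r p δ I i x a z := by
  obtain ⟨k, hk⟩ : ∃ k, I - i = k + 1 := ⟨I - (i + 1), by omega⟩
  have hki : I - (i + 1) = k := by omega
  rw [hk]
  simp only [dpval, qval, hki, show I - (k + 1) = i by omega]

theorem qval_le_dpval {i : ℕ} (hi : i < I) (x : S) (a : A) (z : Z) :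
    qval f r p δ I i x a z ≤ dpval f r p δ I (I - i) x z := by
  rw [dpval_sub_eq_sup'_qval f r p δ I hi]
  exact le_sup' (fun a => qval f r p δ I i x a z) (mem_univ a)

theorem exists_qval_eq_dpval (i : ℕ) (x : S) (z : Z) :
    ∃ a : A, i < I → qval f r p δ I i x a z = dpval f r p δ I (I - i) x z := by
  obtain ⟨a, -, ha⟩ := exists_mem_eq_sup' univ_nonempty fun a => qval f r p δ I i x a z
  exact ⟨a, fun hi => by rw [dpval_sub_eq_sup'_qval f r p δ I hi, ha]⟩

/-- The stage-`i` penalty is `δ π_i`, with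
`π_i = V_(i+1)(x_(i+1), ζ_(i+1)) - E[V_(i+1)(x_(i+1), ·) | ζ_i]` the ideal penalty along the
noise path `ζ`. -/
def penalizedReturn (x0 : S) (ζ : ℕ → Z) (σ : ℕ → A) : ℝ :=
  ∑ i ∈ range I, δ ^ i *
    (r i (traj f x0 σ i) (σ i) (ζ i) - δ *
      (dpval f r p δ I (I - (i + 1)) (f (traj f x0 σ i) (σ i)) (ζ (i + 1)) -
        ∑ z' : Z, p (ζ i) z' * dpval f r p δ I (I - (i + 1)) (f (traj f x0 σ i) (σ i)) z'))

theorem penalizedReturn_eq_sum_slack_add_dpval (x0 : S) (ζ : ℕ → Z) (σ : ℕ → A) :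
    penalizedReturn f r p δ I x0 ζ σ =
      ∑ i ∈ range I, δ ^ i * (qval f r p δ I i (traj f x0 σ i) (σ i) (ζ i) -
        dpval f r p δ I (I - i) (traj f x0 σ i) (ζ i)) + dpval f r p δ I I x0 (ζ 0) := by
  have h := sum_range_discounted_penalty_telescope δ I
    (fun i => r i (traj f x0 σ i) (σ i) (ζ i))
    (fun i => ∑ z' : Z, p (ζ i) z' * dpval f r p δ I (I - (i + 1)) (f (traj f x0 σ i) (σ i)) z')
    (fun i => dpval f r p δ I (I - i) (traj f x0 σ i) (ζ i))
  simp only [Nat.sub_self, dpval, mul_zero, sub_zero, Nat.sub_zero] at h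
  exact h

theorem penalizedReturn_le_dpval (hδ : 0 ≤ δ) (x0 : S) (ζ : ℕ → Z) (σ : ℕ → A) :
    penalizedReturn f r p δ I x0 ζ σ ≤ dpval f r p δ I I x0 (ζ 0) := by
  rw [penalizedReturn_eq_sum_slack_add_dpval, add_le_iff_nonpos_left]
  refine sum_nonpos fun i hi => mul_nonpos_of_nonneg_of_nonpos (pow_nonneg hδ i) ?_
  exact sub_nonpos.2 (qval_le_dpval f r p δ I (mem_range.1 hi) _ _ _)

theorem exists_penalizedReturn_eq_dpval (x0 : S) (ζ : ℕ → Z) :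
    ∃ σ : ℕ → A, penalizedReturn f r p δ I x0 ζ σ = dpval f r p δ I I x0 (ζ 0) := by
  choose greedy hgreedy using exists_qval_eq_dpval f r p δ I (A := A)
  obtain ⟨σ, hσ⟩ := exists_eq_feedback_traj f x0 fun n x => greedy n x (ζ n)
  refine ⟨σ, ?_⟩
  rw [penalizedReturn_eq_sum_slack_add_dpval, add_eq_right]
  refine sum_eq_zero fun i hi => ?_
  rw [hσ i, hgreedy i _ _ (mem_range.1 hi), sub_self, mul_zero]

end IdealPenalty

theorem ideal_penalty_zero_variance_general
    (Ω : Type) (P : Ω → ℝ)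
    (Z : Type) [Fintype Z] (ξ : ℕ → Ω → Z) (z0 : Z)
    (hz0 : ∀ ω, P ω ≠ 0 → ξ 0 ω = z0)
    (p : Z → Z → ℝ)
    (S A : Type) [Fintype A] [Nonempty A] (f : S → A → S) (x0 : S)
    (r : ℕ → S → A → Z → ℝ) (δ : ℝ) (hδ0 : 0 < δ) (I : ℕ) :
    ∀ ω : Ω, P ω ≠ 0 →
      sSup {v : ℝ | ∃ σ : ℕ → A,
        v = ∑ i ∈ Finset.range I, δ ^ i *
          (r i (traj f x0 σ i) (σ i) (ξ i ω) - δ *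
            (dpval f r p δ I (I - (i + 1)) (f (traj f x0 σ i) (σ i)) (ξ (i + 1) ω) -
              ∑ z' : Z, p (ξ i ω) z' * dpval f r p δ I (I - (i + 1)) (f (traj f x0 σ i) (σ i)) z'))}
        = dpval f r p δ I I x0 z0 := by
  intro ω hω
  rw [← hz0 ω hω]
  obtain ⟨σ, hσ⟩ := exists_penalizedReturn_eq_dpval f r p δ I x0 (ξ · ω)
  refine IsGreatest.csSup_eq ⟨⟨σ, hσ.symm⟩, ?_⟩
  rintro _ ⟨σ', rfl⟩
  exact penalizedReturn_le_dpval f r p δ I hδ0.le x0 (ξ · ω) σ'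

/-- With ideal penalties built from the exact value function, the penalized hindsight
optimization equals the optimal value `V_0(x_0)` on every sample path of positive probability:
the information relaxation dual with ideal penalties attains the optimal policy value almost
surely, with zero variance. -/
theorem ideal_penalty_zero_variance
    (Ω : Type) [Fintype Ω] (P : Ω → ℝ) (hP0 : ∀ ω, 0 ≤ P ω) (hP1 : ∑ ω, P ω = 1)
    (Z : Type) [Fintype Z] (ξ : ℕ → Ω → Z) (z0 : Z)
    (hz0 : ∀ ω, P ω ≠ 0 → ξ 0 ω = z0)
    (p : Z → Z → ℝ) (hp0 : ∀ z z', 0 ≤ p z z') (hp1 : ∀ z, ∑ z', p z z' = 1)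
    (S A : Type) [Fintype A] [Nonempty A] (f : S → A → S) (x0 : S)
    (r : ℕ → S → A → Z → ℝ) (δ : ℝ) (hδ0 : 0 < δ) (hδ1 : δ ≤ 1) (I : ℕ) (hI : 0 < I) :
    ∀ ω : Ω, P ω ≠ 0 →
      sSup {v : ℝ | ∃ σ : ℕ → A,
        v = ∑ i ∈ Finset.range I, δ ^ i *
          (r i (traj f x0 σ i) (σ i) (ξ i ω) - δ *
            (dpval f r p δ I (I - (i + 1)) (f (traj f x0 σ i) (σ i)) (ξ (i + 1) ω) -
              ∑ z' : Z, p (ξ i ω) z' * dpval f r p δ I (I - (i + 1)) (f (traj f x0 σ i) (σ i)) z'))}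
        = dpval f r p δ I I x0 z0 :=
  ideal_penalty_zero_variance_general Ω P Z ξ z0 hz0 p S A f x0 r δ hδ0 I
end
end

section
/- If a linear program in standard inequality form has a non-degenerate optimal basic solution, then its dual linear program has a unique optimal solution. -/
open Matrix

/-!
At a non-degenerate optimal vertex `x` the active rows form a basis of `ℝⁿ`. The coordinates of
`c` in this basis are nonnegative: for the dual-basis direction `d` of an active row, `x + ε d`
stays feasible for small `ε > 0`, so optimality gives `0 ≤ c ⬝ᵥ d`, which is that coordinate.
Placed on the active rows, these coordinates form a dual solution of value `c ⬝ᵥ x`.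
Complementary slackness forces every dual optimum to vanish off the active rows, and linear
independence of those rows then determines it.
-/

theorem vecMul_eq_sum_subtype {ι κ R : Type*} [Fintype ι] [Semiring R] {A : Matrix ι κ R}
    {S : Set ι} [DecidablePred (· ∈ S)] {y : ι → R} (hy : ∀ i ∉ S, y i = 0) :
    y ᵥ* A = ∑ s : S, y s • A s := by
  rw [vecMul_eq_sum]
  exact Finset.sum_congr_set S _ _ (fun _ _ => rfl) fun i hi => by simp [hy i hi]

theorem eq_of_vecMul_eq_of_linearIndepOn {ι κ R : Type*} [Fintype ι] [Semiring R]
    {A : Matrix ι κ R} {S : Set ι} (hA : LinearIndepOn R A S) {y y' : ι → R} (hy : ∀ i ∉ S, y i = 0)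
    (hy' : ∀ i ∉ S, y' i = 0) (h : y ᵥ* A = y' ᵥ* A) : y = y' := by
  classical
  rw [vecMul_eq_sum_subtype hy, vecMul_eq_sum_subtype hy'] at h
  have hS := Fintype.linearIndependent_iffₛ.1 hA (fun s => y s) (fun s => y' s) h
  funext i
  by_cases hi : i ∈ S
  · exact hS ⟨i, hi⟩
  · rw [hy i hi, hy' i hi]

section LinearProgram

variable {ι κ : Type*} [Fintype ι] [Fintype κ] (A : Matrix ι κ ℝ) (b : ι → ℝ) (c : κ → ℝ)

def IsPrimalFeasible (x : κ → ℝ) : Prop := ∀ i, b i ≤ (A *ᵥ x) i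

def IsPrimalOptimal (x : κ → ℝ) : Prop :=
  IsPrimalFeasible A b x ∧ ∀ x', IsPrimalFeasible A b x' → c ⬝ᵥ x ≤ c ⬝ᵥ x'

def IsDualFeasible (y : ι → ℝ) : Prop := Aᵀ *ᵥ y = c ∧ ∀ i, 0 ≤ y i

def activeSet (x : κ → ℝ) : Set ι := {i | (A *ᵥ x) i = b i}

variable {A b c}

theorem dotProduct_sub_dotProduct_eq_sum_mul_slack {x : κ → ℝ} {y : ι → ℝ} (hy : Aᵀ *ᵥ y = c) :
    c ⬝ᵥ x - b ⬝ᵥ y = ∑ i, y i * ((A *ᵥ x) i - b i) := by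
  rw [← hy, mulVec_transpose, ← dotProduct_mulVec]
  simp only [dotProduct, mul_sub, Finset.sum_sub_distrib, mul_comm (b _)]

theorem IsDualFeasible.dotProduct_le {x : κ → ℝ} {y : ι → ℝ} (hy : IsDualFeasible A c y)
    (hx : IsPrimalFeasible A b x) : b ⬝ᵥ y ≤ c ⬝ᵥ x := by
  rw [← sub_nonneg, dotProduct_sub_dotProduct_eq_sum_mul_slack hy.1]
  exact Finset.sum_nonneg fun i _ => mul_nonneg (hy.2 i) (sub_nonneg.2 (hx i))

theorem IsDualFeasible.dotProduct_eq_iff {x : κ → ℝ} {y : ι → ℝ} (hy : IsDualFeasible A c y)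
    (hx : IsPrimalFeasible A b x) : b ⬝ᵥ y = c ⬝ᵥ x ↔ ∀ i ∉ activeSet A b x, y i = 0 := by
  rw [eq_comm, ← sub_eq_zero, dotProduct_sub_dotProduct_eq_sum_mul_slack hy.1,
    Finset.sum_eq_zero_iff_of_nonneg fun i _ => mul_nonneg (hy.2 i) (sub_nonneg.2 (hx i))]
  simp only [Finset.mem_univ, true_implies, mul_eq_zero, sub_eq_zero]
  exact forall_congr' fun i => ⟨fun h hi => h.resolve_right hi, fun h => or_iff_not_imp_right.2 h⟩

theorem IsPrimalFeasible.exists_pos_add_smul {x d : κ → ℝ} (hx : IsPrimalFeasible A b x)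
    (hd : ∀ i ∈ activeSet A b x, 0 ≤ (A *ᵥ d) i) :
    ∃ ε : ℝ, 0 < ε ∧ IsPrimalFeasible A b (x + ε • d) := by
  suffices h : ∀ᶠ ε in nhdsWithin (0 : ℝ) (Set.Ioi 0), IsPrimalFeasible A b (x + ε • d) from
    (h.and self_mem_nhdsWithin).exists.imp fun ε h => ⟨h.2, h.1⟩
  refine Filter.eventually_all.2 fun i => ?_
  simp only [mulVec_add, mulVec_smul, Pi.add_apply, Pi.smul_apply, smul_eq_mul]
  by_cases hi : i ∈ activeSet A b x
  · filter_upwards [self_mem_nhdsWithin] with ε hε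
    have := mul_nonneg hε.le (hd i hi)
    linarith [hx i]
  · have hslack : b i < (A *ᵥ x) i + 0 * (A *ᵥ d) i := by
      simpa using lt_of_le_of_ne (hx i) (Ne.symm hi)
    refine nhdsWithin_le_nhds <| Filter.Eventually.mono ?_ fun _ => le_of_lt
    exact continuousAt_const.eventually_lt
      (g := fun ε : ℝ => (A *ᵥ x) i + ε * (A *ᵥ d) i) (by fun_prop) hslack

theorem IsPrimalOptimal.dotProduct_nonneg {x d : κ → ℝ} (hx : IsPrimalOptimal A b c x)
    (hd : ∀ i ∈ activeSet A b x, 0 ≤ (A *ᵥ d) i) : 0 ≤ c ⬝ᵥ d := by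
  obtain ⟨ε, hε, hfeas⟩ := hx.1.exists_pos_add_smul hd
  have := hx.2 _ hfeas
  rw [dotProduct_add, dotProduct_smul, smul_eq_mul] at this
  exact nonneg_of_mul_nonneg_right (by linarith) hε

theorem IsPrimalOptimal.repr_nonneg {x : κ → ℝ} (hx : IsPrimalOptimal A b c x)
    (B : Module.Basis (activeSet A b x) ℝ (κ → ℝ)) (hB : ∀ s, B s = A s) (k : activeSet A b x) :
    0 ≤ B.repr c k := by
  classical
  set d := (dotProductEquiv ℝ κ).symm (B.coord k)
  have hd : ∀ v, d ⬝ᵥ v = B.coord k v := fun v => by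
    rw [← dotProductEquiv_apply_apply, LinearEquiv.apply_symm_apply]
  have hAd : ∀ i ∈ activeSet A b x, 0 ≤ (A *ᵥ d) i := fun i hi => by
    rw [mulVec, dotProduct_comm, ← hB ⟨i, hi⟩, hd, Module.Basis.coord_apply, B.repr_self,
      Finsupp.single_apply]
    split_ifs <;> norm_num
  simpa [dotProduct_comm c, hd] using hx.dotProduct_nonneg hAd

theorem IsPrimalOptimal.exists_isDualFeasible {x : κ → ℝ} (hx : IsPrimalOptimal A b c x)
    (B : Module.Basis (activeSet A b x) ℝ (κ → ℝ)) (hB : ∀ s, B s = A s) :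
    ∃ y, IsDualFeasible A c y ∧ ∀ i ∉ activeSet A b x, y i = 0 := by
  classical
  set y : ι → ℝ := fun i => if hi : i ∈ activeSet A b x then B.repr c ⟨i, hi⟩ else 0
  have hy : ∀ i ∉ activeSet A b x, y i = 0 := fun i hi => dif_neg hi
  refine ⟨y, ⟨?_, fun i => ?_⟩, hy⟩
  · rw [mulVec_transpose, vecMul_eq_sum_subtype hy]
    conv_rhs => rw [← B.sum_repr c]
    exact Finset.sum_congr rfl fun s _ => by rw [hB, show y s = B.repr c s from dif_pos s.2]
  · by_cases hi : i ∈ activeSet A b x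
    · exact (dif_pos hi).trans_ge (hx.repr_nonneg B hB _)
    · exact (hy i hi).ge

end LinearProgram

/-- If the primal LP `min {cᵀx : Ax ≥ b}` has a non-degenerate optimal basic solution `xs`
(exactly `n` active constraints with linearly independent rows), then the dual LP
`max {bᵀy : Aᵀy = c, y ≥ 0}` has a unique optimal solution. -/
theorem nondegenerate_primal_unique_dual (m n : ℕ) (A : Matrix (Fin m) (Fin n) ℝ)
    (b : Fin m → ℝ) (c : Fin n → ℝ) (xs : Fin n → ℝ)
    (hfeas : ∀ i, b i ≤ A.mulVec xs i)
    (hopt : ∀ x : Fin n → ℝ, (∀ i, b i ≤ A.mulVec x i) → c ⬝ᵥ xs ≤ c ⬝ᵥ x)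
    (hcard : {i : Fin m | A.mulVec xs i = b i}.ncard = n)
    (hind : LinearIndependent ℝ (fun i : {i : Fin m // A.mulVec xs i = b i} => A i.1)) :
    ∃! y : Fin m → ℝ, (Aᵀ.mulVec y = c ∧ ∀ i, 0 ≤ y i) ∧
      ∀ y' : Fin m → ℝ, (Aᵀ.mulVec y' = c ∧ ∀ i, 0 ≤ y' i) → b ⬝ᵥ y' ≤ b ⬝ᵥ y := by
  classical
  have hx : IsPrimalOptimal A b c xs := ⟨hfeas, hopt⟩
  have hcard' : Fintype.card (activeSet A b xs) = Module.finrank ℝ (Fin n → ℝ) := by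
    rw [← Nat.card_eq_fintype_card, Nat.card_coe_set_eq, Module.finrank_fin_fun]
    exact hcard
  obtain ⟨y, hy, hy_supp⟩ := hx.exists_isDualFeasible
    (basisOfLinearIndependentOfCardEqFinrank' _ hind hcard')
    (congrFun (coe_basisOfLinearIndependentOfCardEqFinrank' _ hind hcard'))
  have hy_val : b ⬝ᵥ y = c ⬝ᵥ xs := (hy.dotProduct_eq_iff hfeas).2 hy_supp
  refine ⟨y, ⟨hy, fun y' hy' => hy_val ▸ IsDualFeasible.dotProduct_le hy' hfeas⟩, ?_⟩
  rintro y' ⟨hy' : IsDualFeasible A c y', hy'_opt⟩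
  have hy'_val : b ⬝ᵥ y' = c ⬝ᵥ xs :=
    le_antisymm (hy'.dotProduct_le hfeas) (hy_val ▸ hy'_opt y hy)
  refine eq_of_vecMul_eq_of_linearIndepOn hind
    ((hy'.dotProduct_eq_iff hfeas).1 hy'_val) hy_supp ?_
  rw [← mulVec_transpose, ← mulVec_transpose, hy.1, hy'.1]
end

section
/- For any feasible policy π of a finite-horizon MDP and any martingale-difference penalty, the expected penalized value of π equals its unpenalized expected value; hence the hindsight maximum of penalized values dominates the value of every feasible policy. -/
noncomputable section
open Finset
open scoped Classical

/-! The penalty of stage `i` is evaluated at the state and action of stage `i`,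
which a nonanticipative policy determines from `ξ 0, …, ξ i` alone. Summing the penalty first
over each class of scenarios sharing that history, the state and action are frozen and the
martingale-difference condition makes each class sum vanish, so the penalties drop out of the
expected value of every feasible policy. Pointwise, the realised action sequence of a feasible
policy is one of the anticipative choices, whence the bound on the hindsight maximum. -/

theorem Finset.sum_eq_zero_of_sum_classes_eq_zero {Ω X M : Type*} [AddCommMonoid M]
    (R : Setoid Ω) [DecidableRel R] (s : Finset Ω) (F : X → Ω → M)
    (hF : ∀ x, ∀ ω ∈ s, ∑ ω' ∈ s with R ω' ω, F x ω' = 0)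
    (Y : Ω → X) (hY : ∀ ω ω', R ω ω' → Y ω = Y ω') :
    ∑ ω ∈ s, F (Y ω) ω = 0 := by
  refine sum_cancels_of_partition_cancels R fun ω hω => ?_
  rw [sum_congr rfl fun ω' hω' => by rw [hY ω' ω (mem_filter.1 hω').2]]
  exact hF (Y ω) ω hω

theorem Finset.sum_mul_sum_sub_eq_of_sum_mul_eq_zero {Ω ι : Type*} [Fintype Ω] (P : Ω → ℝ)
    (s : Finset ι) (c : ι → ℝ) (a b : ι → Ω → ℝ) (hb : ∀ i ∈ s, ∑ ω, P ω * b i ω = 0) :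
    ∑ ω, P ω * ∑ i ∈ s, c i * (a i ω - b i ω) = ∑ ω, P ω * ∑ i ∈ s, c i * a i ω := by
  have hcb : ∑ ω, ∑ i ∈ s, P ω * (c i * b i ω) = 0 := by
    rw [sum_comm]
    refine sum_eq_zero fun i hi => ?_
    simp_rw [mul_left_comm (P _)]
    rw [← mul_sum, hb i hi, mul_zero]
  simp only [mul_sub, sum_sub_distrib, mul_sum, hcb, sub_zero]

theorem DependsOn.finite_range {ι A β : Type*} [Finite A] [Nonempty A] {F : (ι → A) → β}
    {s : Set ι} (hs : s.Finite) (hF : DependsOn F s) : (Set.range F).Finite := by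
  have := hs.to_subtype
  let extend : (s → A) → ι → A := fun τ i =>
    if h : i ∈ s then τ ⟨i, h⟩ else Classical.arbitrary A
  refine (Set.finite_range (F ∘ extend)).subset ?_
  rintro _ ⟨σ, rfl⟩
  exact ⟨fun i => σ i, hF fun i hi => by simp [extend, hi]⟩

section MDP

variable {Ω Z S A : Type}

theorem dependsOn_traj (f : S → A → S) (x0 : S) :
    ∀ n, DependsOn (fun σ => traj f x0 σ n) (Set.Iio n)
  | 0 => fun _ _ _ => rfl
  | n + 1 => fun _ _ h =>
    congrArg₂ f (dependsOn_traj f x0 n fun j hj => h j (Nat.lt_succ_of_lt hj))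
      (h n (Nat.lt_succ_self n))

/-- The partition of scenarios by the information available at stage `i`. -/
def historySetoid (ξ : ℕ → Ω → Z) (i : ℕ) : Setoid Ω where
  r ω ω' := ∀ j ≤ i, ξ j ω = ξ j ω'
  iseqv := ⟨fun _ _ _ => rfl, fun h j hj => (h j hj).symm,
    fun h h' j hj => (h j hj).trans (h' j hj)⟩

def IsNonanticipative (ξ : ℕ → Ω → Z) (π : ℕ → Ω → A) : Prop :=
  ∀ i ω ω', historySetoid ξ i ω ω' → π i ω = π i ω'

theorem IsNonanticipative.traj_eq {ξ : ℕ → Ω → Z} {π : ℕ → Ω → A} (hπ : IsNonanticipative ξ π)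
    (f : S → A → S) (x0 : S) {i : ℕ} {ω ω' : Ω} (h : historySetoid ξ i ω ω') :
    traj f x0 (fun n => π n ω) i = traj f x0 (fun n => π n ω') i :=
  dependsOn_traj f x0 i fun j hj => hπ j ω ω' fun k hk => h k (hk.trans (le_of_lt hj))

theorem IsNonanticipative.sum_mul_penalty_eq_zero [Fintype Ω] (P : Ω → ℝ) {ξ : ℕ → Ω → Z}
    (f : S → A → S) (x0 : S) (pen : ℕ → S → A → Ω → ℝ)
    (hmart : ∀ (i : ℕ) (x : S) (a : A) (ω : Ω),
      ∑ ω' ∈ univ.filter (fun ω' => ∀ j ≤ i, ξ j ω' = ξ j ω), P ω' * pen i x a ω' = 0)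
    {π : ℕ → Ω → A} (hπ : IsNonanticipative ξ π) (i : ℕ) :
    ∑ ω, P ω * pen i (traj f x0 (fun n => π n ω) i) (π i ω) ω = 0 :=
  sum_eq_zero_of_sum_classes_eq_zero (historySetoid ξ i) univ
    (fun xa ω => P ω * pen i xa.1 xa.2 ω)
    (fun xa ω _ => by convert hmart i xa.1 xa.2 ω; exact Iff.rfl)
    (fun ω => (traj f x0 (fun n => π n ω) i, π i ω))
    (fun _ _ h => Prod.ext (hπ.traj_eq f x0 h) (hπ i _ _ h))

theorem IsNonanticipative.sum_mul_penalized_return_eq [Fintype Ω] (P : Ω → ℝ)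
    {ξ : ℕ → Ω → Z} (f : S → A → S) (x0 : S) (g : ℕ → S → A → Ω → ℝ) (δ : ℝ) (I : ℕ)
    (pen : ℕ → S → A → Ω → ℝ)
    (hmart : ∀ (i : ℕ) (x : S) (a : A) (ω : Ω),
      ∑ ω' ∈ univ.filter (fun ω' => ∀ j ≤ i, ξ j ω' = ξ j ω), P ω' * pen i x a ω' = 0)
    {π : ℕ → Ω → A} (hπ : IsNonanticipative ξ π) :
    ∑ ω, P ω * ∑ i ∈ range I, δ ^ i *
        (g i (traj f x0 (fun n => π n ω) i) (π i ω) ω -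
          δ * pen i (traj f x0 (fun n => π n ω) i) (π i ω) ω)
      = ∑ ω, P ω * ∑ i ∈ range I, δ ^ i * g i (traj f x0 (fun n => π n ω) i) (π i ω) ω :=
  sum_mul_sum_sub_eq_of_sum_mul_eq_zero P _ _ _
    (fun i ω => δ * pen i (traj f x0 (fun n => π n ω) i) (π i ω) ω) fun i _ => by
      simp_rw [mul_left_comm (P _), ← mul_sum, hπ.sum_mul_penalty_eq_zero P f x0 pen hmart i,
        mul_zero]

def discountedReturn (f : S → A → S) (x0 : S) (δ : ℝ) (I : ℕ) (g : ℕ → S → A → ℝ)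
    (σ : ℕ → A) : ℝ :=
  ∑ i ∈ range I, δ ^ i * g i (traj f x0 σ i) (σ i)

theorem dependsOn_discountedReturn (f : S → A → S) (x0 : S) (δ : ℝ) (I : ℕ)
    (g : ℕ → S → A → ℝ) : DependsOn (discountedReturn f x0 δ I g) (Set.Iio I) :=
  fun _ _ h => sum_congr rfl fun i hi =>
    have hiI := mem_range.1 hi
    congrArg₂ (fun x a => δ ^ i * g i x a) (dependsOn_traj f x0 i fun j hj => h j (hj.trans hiI))
      (h i hiI)

theorem bddAbove_discountedReturn [Finite A] [Nonempty A] (f : S → A → S) (x0 : S) (δ : ℝ)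
    (I : ℕ) (g : ℕ → S → A → ℝ) :
    BddAbove {v : ℝ | ∃ σ : ℕ → A, v = discountedReturn f x0 δ I g σ} :=
  (((dependsOn_discountedReturn f x0 δ I g).finite_range (Set.finite_Iio I)).subset <| by
    rintro _ ⟨σ, rfl⟩; exact ⟨σ, rfl⟩).bddAbove

end MDP

theorem penalized_policy_value_invariance_general
    (Ω : Type) [Fintype Ω] (P : Ω → ℝ) (hP0 : ∀ ω, 0 ≤ P ω)
    (Z : Type) (ξ : ℕ → Ω → Z)
    (S A : Type) [Fintype A] [Nonempty A] (f : S → A → S) (x0 : S)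
    (r : ℕ → S → A → Z → ℝ) (δ : ℝ) (I : ℕ)
    (pen : ℕ → S → A → Ω → ℝ)
    (hmart : ∀ (i : ℕ) (x : S) (a : A) (ω : Ω),
      ∑ ω' ∈ Finset.univ.filter (fun ω' => ∀ j ≤ i, ξ j ω' = ξ j ω), P ω' * pen i x a ω' = 0) :
    (∀ π : ℕ → Ω → A,
      (∀ (i : ℕ) (ω ω' : Ω), (∀ j ≤ i, ξ j ω = ξ j ω') → π i ω = π i ω') →
      ∑ ω, P ω * ∑ i ∈ Finset.range I, δ ^ i *
          (r i (traj f x0 (fun n => π n ω) i) (π i ω) (ξ i ω) -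
            δ * pen i (traj f x0 (fun n => π n ω) i) (π i ω) ω)
        = ∑ ω, P ω * ∑ i ∈ Finset.range I, δ ^ i *
            r i (traj f x0 (fun n => π n ω) i) (π i ω) (ξ i ω)) ∧
    (⨆ π : {π : ℕ → Ω → A //
        ∀ (i : ℕ) (ω ω' : Ω), (∀ j ≤ i, ξ j ω = ξ j ω') → π i ω = π i ω'},
      ∑ ω, P ω * ∑ i ∈ Finset.range I,
        δ ^ i * r i (traj f x0 (fun n => π.1 n ω) i) (π.1 i ω) (ξ i ω)) ≤
      ∑ ω, P ω * sSup {v : ℝ | ∃ σ : ℕ → A,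
        v = ∑ i ∈ Finset.range I, δ ^ i *
          (r i (traj f x0 σ i) (σ i) (ξ i ω) - δ * pen i (traj f x0 σ i) (σ i) ω)} := by
  have invariance := fun π (hπ : IsNonanticipative ξ π) =>
    hπ.sum_mul_penalized_return_eq P f x0 (fun i x a ω => r i x a (ξ i ω)) δ I pen hmart
  refine ⟨invariance, ?_⟩
  refine @ciSup_le _ _ _ ⟨⟨fun _ _ => Classical.arbitrary A, fun _ _ _ _ => rfl⟩⟩ _ _ fun π => ?_
  rw [← invariance π.1 π.2]
  refine sum_le_sum fun ω _ => mul_le_mul_of_nonneg_left ?_ (hP0 ω)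
  exact le_csSup (bddAbove_discountedReturn f x0 δ I
    fun i x a => r i x a (ξ i ω) - δ * pen i x a ω) ⟨fun n => π.1 n ω, rfl⟩

/-- For any nonanticipative policy `π` of a finite-horizon MDP and any martingale-difference
penalty, the expected penalized value of `π` equals its unpenalized expected value; hence the
expected hindsight maximum of penalized values dominates the value of every feasible policy. -/
theorem penalized_policy_value_invariance
    (Ω : Type) [Fintype Ω] (P : Ω → ℝ) (hP0 : ∀ ω, 0 ≤ P ω) (hP1 : ∑ ω, P ω = 1)
    (Z : Type) (ξ : ℕ → Ω → Z)
    (S A : Type) [Fintype A] [Nonempty A] (f : S → A → S) (x0 : S)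
    (r : ℕ → S → A → Z → ℝ) (δ : ℝ) (hδ0 : 0 < δ) (hδ1 : δ ≤ 1) (I : ℕ) (hI : 0 < I)
    (pen : ℕ → S → A → Ω → ℝ)
    (hmart : ∀ (i : ℕ) (x : S) (a : A) (ω : Ω),
      ∑ ω' ∈ Finset.univ.filter (fun ω' => ∀ j ≤ i, ξ j ω' = ξ j ω), P ω' * pen i x a ω' = 0) :
    (∀ π : ℕ → Ω → A,
      (∀ (i : ℕ) (ω ω' : Ω), (∀ j ≤ i, ξ j ω = ξ j ω') → π i ω = π i ω') →
      ∑ ω, P ω * ∑ i ∈ Finset.range I, δ ^ i *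
          (r i (traj f x0 (fun n => π n ω) i) (π i ω) (ξ i ω) -
            δ * pen i (traj f x0 (fun n => π n ω) i) (π i ω) ω)
        = ∑ ω, P ω * ∑ i ∈ Finset.range I, δ ^ i *
            r i (traj f x0 (fun n => π n ω) i) (π i ω) (ξ i ω)) ∧
    (⨆ π : {π : ℕ → Ω → A //
        ∀ (i : ℕ) (ω ω' : Ω), (∀ j ≤ i, ξ j ω = ξ j ω') → π i ω = π i ω'},
      ∑ ω, P ω * ∑ i ∈ Finset.range I,
        δ ^ i * r i (traj f x0 (fun n => π.1 n ω) i) (π.1 i ω) (ξ i ω)) ≤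
      ∑ ω, P ω * sSup {v : ℝ | ∃ σ : ℕ → A,
        v = ∑ i ∈ Finset.range I, δ ^ i *
          (r i (traj f x0 σ i) (σ i) (ξ i ω) - δ * pen i (traj f x0 σ i) (σ i) ω)} :=
  penalized_policy_value_invariance_general Ω P hP0 Z ξ S A f x0 r δ I pen hmart
end
end
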